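/- Let f : ℝ → ℝ be C³ with f(0) = f'(0) = 0 and f''(0) > 0. For small h > 0 let s(h) < 0 < t(h) solve f(x) = h, and let V(h) = (1/2)·(−f'(s)f'(t)/(f'(t) − f'(s)))·(t − s)² be the area of the triangle formed by the chord endpoints and the intersection of the tangents at them. Then V(h)/h^{3/2} → 2√2/√(f''(0)) as h → 0⁺. -/

import Mathlib

/-!
Rescale by `1 / √h`. Since `f x ~ f''(0) x² / 2`, the chord endpoints satisfy `s / √h → -r` and
`t / √h → r` with `r = √(2 / f''(0))`; since `f' x ~ f''(0) x`, the rescaled tangent slopes tend to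
`∓ f''(0) r`. The area is homogeneous of degree three under this rescaling, so `V(h) / h^{3/2}`
tends to the area of the limiting symmetric triangle, `f''(0) r³ = 2 r`.
-/

open Real Filter Set Topology

/-- The area `V` of the triangle cut out by the horizontal chord with endpoints of abscissae
`a`, `b` and the tangent lines of slopes `p`, `q` at these endpoints. -/
noncomputable def chordTangentArea (a b p q : ℝ) : ℝ :=
  1 / 2 * (-(p * q) / (q - p)) * (b - a) ^ 2

lemma chordTangentArea_div (a b p q k : ℝ) :
    chordTangentArea a b p q / k ^ 3 = chordTangentArea (a / k) (b / k) (p / k) (q / k) := by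
  unfold chordTangentArea
  rcases eq_or_ne k 0 with rfl | hk
  · simp
  rcases eq_or_ne (q - p) 0 with hpq | hpq
  · have : q / k - p / k = 0 := by rw [← sub_div, hpq, zero_div]
    simp [hpq, this]
  · have : q / k - p / k ≠ 0 := by rw [← sub_div]; exact div_ne_zero hpq hk
    field_simp

lemma chordTangentArea_symmetric (c r : ℝ) (hc : c ≠ 0) (hr : r ≠ 0) :
    chordTangentArea (-r) r (c * -r) (c * r) = c * r ^ 3 := by
  unfold chordTangentArea
  field_simp
  ring

lemma chordTangentArea_symmetric_sqrt_two_div {c : ℝ} (hc : 0 < c) :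
    chordTangentArea (-√(2 / c)) √(2 / c) (c * -√(2 / c)) (c * √(2 / c)) = 2 * √2 / √c := by
  rw [chordTangentArea_symmetric c _ hc.ne' (sqrt_pos.2 (by positivity)).ne', pow_succ,
    sq_sqrt (by positivity), ← mul_assoc, mul_div_cancel₀ _ hc.ne', sqrt_div zero_le_two,
    mul_div_assoc]

lemma Filter.Tendsto.chordTangentArea {α : Type*} {l : Filter α} {a b p q : α → ℝ}
    {a₀ b₀ p₀ q₀ : ℝ} (ha : Tendsto a l (𝓝 a₀)) (hb : Tendsto b l (𝓝 b₀))
    (hp : Tendsto p l (𝓝 p₀)) (hq : Tendsto q l (𝓝 q₀)) (hpq : p₀ ≠ q₀) :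
    Tendsto (fun i => chordTangentArea (a i) (b i) (p i) (q i)) l
      (𝓝 (chordTangentArea a₀ b₀ p₀ q₀)) :=
  (((hp.mul hq).neg.div (hq.sub hp) (sub_ne_zero.2 hpq.symm)).const_mul _).mul ((hb.sub ha).pow 2)

lemma tendsto_div_self_of_hasDerivAt {g : ℝ → ℝ} {c : ℝ} (hg : HasDerivAt g c 0) (hg0 : g 0 = 0) :
    Tendsto (fun x => g x / x) (𝓝[≠] 0) (𝓝 c) := by
  simpa [slope_fun_def, hg0, div_eq_inv_mul] using hg.tendsto_slope

lemma tendsto_div_sq_of_hasDerivAt_deriv {f : ℝ → ℝ} {c : ℝ}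
    (hf : ∀ᶠ x in 𝓝 0, DifferentiableAt ℝ f x) (hf' : HasDerivAt (deriv f) c 0) (h0 : f 0 = 0)
    (h1 : deriv f 0 = 0) :
    Tendsto (fun x => f x / x ^ 2) (𝓝[≠] 0) (𝓝 (c / 2)) := by
  have hf0 : Tendsto f (𝓝[≠] 0) (𝓝 0) :=
    (h0 ▸ hf.self_of_nhds.continuousAt.tendsto).mono_left nhdsWithin_le_nhds
  have hsq0 : Tendsto (fun x : ℝ => x ^ 2) (𝓝[≠] 0) (𝓝 0) := by
    simpa using ((continuous_pow 2).tendsto (0 : ℝ)).mono_left nhdsWithin_le_nhds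
  refine HasDerivAt.lhopital_zero_nhdsNE (f' := deriv f) (g' := fun x => 2 * x)
    ((hf.filter_mono nhdsWithin_le_nhds).mono fun x hx => hx.hasDerivAt) (.of_forall fun x => by simpa using hasDerivAt_pow 2 x)
    ?_ hf0 hsq0 ?_
  · filter_upwards [self_mem_nhdsWithin] with x hx using mul_ne_zero two_ne_zero hx
  · simpa only [div_div, mul_comm] using (tendsto_div_self_of_hasDerivAt hf' h1).div_const 2

lemma tendsto_abs_div_sqrt_of_tendsto_div_sq {α : Type*} {l : Filter α} {f : ℝ → ℝ} {L : ℝ}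
    (hL : L ≠ 0) (hf : Tendsto (fun x => f x / x ^ 2) (𝓝[≠] 0) (𝓝 L)) {u y : α → ℝ}
    (hu : Tendsto u l (𝓝[≠] 0)) (hfu : ∀ᶠ i in l, f (u i) = y i) :
    Tendsto (fun i => |u i| / √(y i)) l (𝓝 √L⁻¹) := by
  have hsq : Tendsto (fun i => u i ^ 2 / y i) l (𝓝 L⁻¹) :=
    ((hf.comp hu).inv₀ hL).congr' <| hfu.mono fun i hi => by simp [hi, inv_div]
  simpa only [sqrt_div (sq_nonneg _), sqrt_sq_eq_abs] using hsq.sqrt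

lemma tendsto_comp_div_of_tendsto_div_self {α : Type*} {l : Filter α} {g : ℝ → ℝ} {c a : ℝ}
    (hg : Tendsto (fun x => g x / x) (𝓝[≠] 0) (𝓝 c)) {u k : α → ℝ} (hu : Tendsto u l (𝓝[≠] 0))
    (huk : Tendsto (fun i => u i / k i) l (𝓝 a)) :
    Tendsto (fun i => g (u i) / k i) l (𝓝 (c * a)) :=
  ((hg.comp hu).mul huk).congr' <| (tendsto_nhdsWithin_iff.1 hu).2.mono fun _ hi =>
    div_mul_div_cancel₀ hi

theorem stmt14 (f : ℝ → ℝ) (hf : ContDiff ℝ 3 f)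
    (h0 : f 0 = 0) (h1 : deriv f 0 = 0) (h2 : 0 < deriv (deriv f) 0)
    (ε : ℝ) (hε : 0 < ε) (s t : ℝ → ℝ)
    (hst : ∀ h ∈ Ioo 0 ε, s h < 0 ∧ 0 < t h ∧ f (s h) = h ∧ f (t h) = h)
    (hs0 : Tendsto s (nhdsWithin 0 (Ioi 0)) (nhds 0))
    (ht0 : Tendsto t (nhdsWithin 0 (Ioi 0)) (nhds 0))
    (V : ℝ → ℝ)
    (hV : ∀ h, V h = (1 / 2) * (-(deriv f (s h) * deriv f (t h))
        / (deriv f (t h) - deriv f (s h))) * (t h - s h) ^ 2) :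
    Tendsto (fun h => V h / (h * Real.sqrt h)) (nhdsWithin 0 (Ioi 0))
      (nhds (2 * Real.sqrt 2 / Real.sqrt (deriv (deriv f) 0))) := by
  set c := deriv (deriv f) 0
  have hr : 0 < √(2 / c) := sqrt_pos.2 (by positivity)
  have hf'' : HasDerivAt (deriv f) c 0 :=
    ((hf.of_le (by norm_num)).differentiable_deriv_two 0).hasDerivAt
  have hslope := tendsto_div_self_of_hasDerivAt hf'' h1
  have hval := tendsto_div_sq_of_hasDerivAt_deriv
    (.of_forall (hf.differentiable (by norm_num))) hf'' h0 h1
  have hmem : ∀ᶠ h in 𝓝[>] 0, h ∈ Ioo 0 ε := Ioo_mem_nhdsGT hε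
  have hs : Tendsto s (𝓝[>] 0) (𝓝[≠] 0) :=
    tendsto_nhdsWithin_iff.2 ⟨hs0, hmem.mono fun h hh => (hst h hh).1.ne⟩
  have ht : Tendsto t (𝓝[>] 0) (𝓝[≠] 0) :=
    tendsto_nhdsWithin_iff.2 ⟨ht0, hmem.mono fun h hh => (hst h hh).2.1.ne'⟩
  have hs_abs := tendsto_abs_div_sqrt_of_tendsto_div_sq (by positivity) hval hs
    (hmem.mono fun h hh => (hst h hh).2.2.1)
  have ht_abs := tendsto_abs_div_sqrt_of_tendsto_div_sq (by positivity) hval ht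
    (hmem.mono fun h hh => (hst h hh).2.2.2)
  rw [inv_div] at hs_abs ht_abs
  have hs_scaled : Tendsto (fun h => s h / √h) (𝓝[>] 0) (𝓝 (-√(2 / c))) :=
    hs_abs.neg.congr' <| hmem.mono fun h hh => by rw [abs_of_neg (hst h hh).1, neg_div, neg_neg]
  have ht_scaled : Tendsto (fun h => t h / √h) (𝓝[>] 0) (𝓝 √(2 / c)) :=
    ht_abs.congr' <| hmem.mono fun h hh => by rw [abs_of_pos (hst h hh).2.1]
  have hlim := hs_scaled.chordTangentArea ht_scaled
    (tendsto_comp_div_of_tendsto_div_self hslope hs hs_scaled)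
    (tendsto_comp_div_of_tendsto_div_self hslope ht ht_scaled) (by nlinarith [mul_pos h2 hr])
  rw [← chordTangentArea_symmetric_sqrt_two_div h2]
  refine hlim.congr' (hmem.mono fun h hh => ?_)
  show _ = V h / (h * √h)
  rw [← chordTangentArea_div, hV h, pow_succ, sq_sqrt hh.1.le]
  rfl
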